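/- Consider the continuous 2-homogeneous polynomial P : ℓ² → ℝ defined on the real Hilbert sequence space ℓ² (indexed by k ≥ 1) by P(x) = x₁² + Σ_{k=2}^∞ (k/(k+1)) x_k². Then: (i) for every x ∈ ℓ² with Σ_{k=1}^∞ x_k² ≤ 1 one has P(x) ≤ 1; (ii) P(e₁) = 1, where e₁ is the first standard unit vector, so ‖P‖ = 1 and P attains its norm; and (iii) P is not weakly sequentially continuous: the standard unit vectors (e_k)_{k≥1} converge weakly to 0 in ℓ², but P(e_k) = k/(k+1) → 1 ≠ 0 = P(0). -/

import Mathlib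

/-!
All weights of `P` lie in `[0, 1]`, so `P x ≤ ‖x‖²`, with equality at `e₁`. By the Riesz
representation every bounded functional on `ℓ²` is `⟪y, ·⟫`, and its value `y k` at `e_k` tends
to `0` since `y` is square-summable; meanwhile `P(e_k)` is the `k`-th weight, which tends to `1`.
-/

open Filter Topology

/-- The 2-homogeneous polynomial `P : ℓ² → ℝ`,
`P(x) = x₁² + ∑_{k ≥ 2} (k/(k+1)) x_k²` (here indexed over `ℕ`: the coefficient of
`(x 0)²` is `1` and that of `(x k)²` for `k ≥ 1` is `(k+1)/(k+2)`, which corresponds to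
`j/(j+1)` for the original index `j = k+1 ≥ 2`). -/
noncomputable def Pfun (x : lp (fun _ : ℕ => ℝ) 2) : ℝ :=
  ∑' k : ℕ, (if k = 0 then (1 : ℝ) else ((k : ℝ) + 1) / ((k : ℝ) + 2)) * (x k) ^ 2

theorem Memℓp.tendsto_norm_cofinite_zero {ι : Type*} {E : ι → Type*}
    [∀ i, NormedAddCommGroup (E i)] {p : ENNReal} (hp : 0 < p.toReal) {f : ∀ i, E i}
    (hf : Memℓp f p) : Tendsto (fun i => ‖f i‖) cofinite (𝓝 0) := by
  have h := ((hf.summable hp).tendsto_cofinite_zero).rpow_const (p := p.toReal⁻¹)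
    (Or.inr (inv_nonneg.2 hp.le))
  rw [Real.zero_rpow (inv_ne_zero hp.ne')] at h
  refine h.congr fun i => ?_
  exact Real.rpow_rpow_inv (norm_nonneg _) hp.ne'

namespace lp

variable {ι : Type*}

theorem hasSum_sq (x : lp (fun _ : ι => ℝ) 2) : HasSum (fun i => x i ^ 2) (‖x‖ ^ 2) := by
  have h := lp.hasSum_inner (𝕜 := ℝ) x x
  rw [real_inner_self_eq_norm_sq] at h
  simpa [sq] using h

theorem tsum_mul_sq_le_norm_sq {c : ι → ℝ} (hc0 : ∀ i, 0 ≤ c i) (hc1 : ∀ i, c i ≤ 1)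
    (x : lp (fun _ : ι => ℝ) 2) : ∑' i, c i * x i ^ 2 ≤ ‖x‖ ^ 2 := by
  have hx := hasSum_sq x
  have hle : ∀ i, c i * x i ^ 2 ≤ x i ^ 2 := fun i => mul_le_of_le_one_left (sq_nonneg _) (hc1 i)
  have hsum : Summable fun i => c i * x i ^ 2 :=
    hx.summable.of_nonneg_of_le (fun i => mul_nonneg (hc0 i) (sq_nonneg _)) hle
  exact hasSum_le hle hsum.hasSum hx

theorem tsum_mul_sq_single [DecidableEq ι] (c : ι → ℝ) (i : ι) :
    ∑' k, c k * (lp.single 2 i (1 : ℝ) : lp (fun _ : ι => ℝ) 2) k ^ 2 = c i := by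
  rw [tsum_eq_single i fun k hk => by simp [hk]]
  simp

theorem tendsto_apply_single_cofinite [DecidableEq ι] (φ : lp (fun _ : ι => ℝ) 2 →L[ℝ] ℝ) :
    Tendsto (fun i => φ (lp.single 2 i (1 : ℝ))) cofinite (𝓝 0) := by
  obtain ⟨y, rfl⟩ := (InnerProductSpace.toDual ℝ (lp (fun _ : ι => ℝ) 2)).surjective φ
  have hy : ∀ i, InnerProductSpace.toDual ℝ _ y (lp.single 2 i (1 : ℝ)) = y i := fun i => by
    simp [InnerProductSpace.toDual_apply_apply, lp.inner_single_right]
  simp only [hy]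
  exact tendsto_zero_iff_norm_tendsto_zero.2
    ((lp.memℓp y).tendsto_norm_cofinite_zero (by norm_num))

end lp

noncomputable def Pweight (k : ℕ) : ℝ := if k = 0 then 1 else ((k : ℝ) + 1) / ((k : ℝ) + 2)

theorem Pfun_eq_tsum (x : lp (fun _ : ℕ => ℝ) 2) : Pfun x = ∑' k, Pweight k * x k ^ 2 := rfl

theorem Pweight_nonneg (k : ℕ) : 0 ≤ Pweight k := by
  unfold Pweight; split_ifs <;> positivity

theorem Pweight_le_one (k : ℕ) : Pweight k ≤ 1 := by
  unfold Pweight; split_ifs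
  · rfl
  · rw [div_le_one (by positivity)]; linarith

theorem tendsto_Pweight_atTop : Tendsto Pweight atTop (𝓝 1) := by
  have h := (tendsto_natCast_div_add_atTop (1 : ℝ)).comp (tendsto_add_atTop_nat 1)
  refine h.congr' ((eventually_ne_atTop 0).mono fun k hk => ?_)
  simp only [Function.comp_apply, Pweight, if_neg hk]
  push_cast; ring_nf

/-- Example 2.18(4): `P` as above satisfies (i) `P(x) ≤ 1` on the closed unit ball,
(ii) `P(e₁) = 1` with `‖e₁‖ ≤ 1`, so `‖P‖ = 1` and `P` attains its norm, and
(iii) `P` is not weakly sequentially continuous: the unit vectors `(e_k)` are weakly null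
but `P(e_k) → 1 ≠ 0 = P(0)`. -/
theorem stmt19 :
    -- (i)
    (∀ x : lp (fun _ : ℕ => ℝ) 2, ‖x‖ ≤ 1 → Pfun x ≤ 1) ∧
    -- (ii)
    (‖(lp.single 2 0 (1 : ℝ) : lp (fun _ : ℕ => ℝ) 2)‖ ≤ 1 ∧
      Pfun (lp.single 2 0 (1 : ℝ)) = 1) ∧
    -- (iii): the standard unit vectors are weakly null ...
    (∀ φ : lp (fun _ : ℕ => ℝ) 2 →L[ℝ] ℝ,
      Filter.Tendsto (fun m : ℕ => φ (lp.single 2 m (1 : ℝ))) Filter.atTop (nhds 0)) ∧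
    -- ... but `P(e_m) → 1 ≠ 0 = P 0`
    Filter.Tendsto (fun m : ℕ => Pfun (lp.single 2 m (1 : ℝ))) Filter.atTop (nhds 1) ∧
    Pfun 0 = 0 := by
  refine ⟨fun x hx => ?_, ⟨by simp [lp.norm_single], ?_⟩,
    fun φ => Nat.cofinite_eq_atTop ▸ lp.tendsto_apply_single_cofinite φ, ?_, by simp [Pfun]⟩
  · calc Pfun x ≤ ‖x‖ ^ 2 := lp.tsum_mul_sq_le_norm_sq Pweight_nonneg Pweight_le_one x
      _ ≤ 1 := pow_le_one₀ (norm_nonneg _) hx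
  · rw [Pfun_eq_tsum, lp.tsum_mul_sq_single]
    exact if_pos rfl
  · simpa only [Pfun_eq_tsum, lp.tsum_mul_sq_single] using tendsto_Pweight_atTop
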